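/- arXiv:2310.17497 — 4 statements merged into one kernel-verified Lean document; each statement's English description precedes it below -/
import Mathlib

section
/- Let f be a real-valued function on pairs of finitely supported integer-valued functions on S that is Lipschitz with constant C_f with respect to the ℓ¹ metric, and assume Σ_k k ν_k < ∞. Then there exists a constant C = C(κ, γ, ν, C_f), for instance C = 2C_f(κ + γ Σ_{k≥0} ν_k |k−1|), such that |L⁽²⁾f(φ,ψ)| ≤ C ‖(φ,ψ)‖₂² for all finitely supported φ, ψ : S → ℕ. -/
/-!
Every transition of the dynamics moves the configuration by a bounded ℓ¹ distance: a hop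
`φ ↦ φ^{x→y}` by at most `2`, a branching event at `x` with `k` offspring by `|k - 1|`. Hence each
increment of `f` is at most `|C_f|` times that distance, and the generator is bounded by the total
rates: `κ (Σ φ + Σ ψ)` for the hops (using `Σ_y p_{xy} = 1`) and `γ M Σ φψ` for the branchings,
with `M = Σ_k ν_k |k - 1|`. For nonnegative integers `n ≤ n²` and `2ab ≤ a² + b²`, so both rates
are bounded by `‖(φ,ψ)‖₂²`.
-/

open Finsupp

section Summation

variable {ι α β : Type*}

theorem abs_tsum_mul_le_of_abs_le {r g b : ι → ℝ} (hr : ∀ i, 0 ≤ r i) (hg : ∀ i, |g i| ≤ b i)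
    (hs : Summable fun i => r i * b i) : |∑' i, r i * g i| ≤ ∑' i, r i * b i :=
  tsum_of_norm_bounded (f := fun i => r i * g i) hs.hasSum fun i => by
    rw [Real.norm_eq_abs, abs_mul, abs_of_nonneg (hr i)]
    exact mul_le_mul_of_nonneg_left (hg i) (hr i)

theorem abs_tsum_mul_le_of_hasSum {r g : ι → ℝ} {a c : ℝ} (hr : ∀ i, 0 ≤ r i) (hra : HasSum r a)
    (hg : ∀ i, |g i| ≤ c) : |∑' i, r i * g i| ≤ a * c := by
  rw [← hra.tsum_eq, ← tsum_mul_right]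
  exact abs_tsum_mul_le_of_abs_le hr hg (hra.summable.mul_right c)

theorem hasSum_mul_of_hasSum_one {w : α → ℝ} {a : ℝ} {p : α → β → ℝ} (hw : ∀ x, 0 ≤ w x)
    (hwa : HasSum w a) (hp : ∀ x y, 0 ≤ p x y) (hp₁ : ∀ x, HasSum (p x) 1) :
    HasSum (fun q : α × β => w q.1 * p q.1 q.2) a := by
  have fiber (x : α) : HasSum (fun y => w x * p x y) (w x) := by
    simpa using (hp₁ x).mul_left (w x)
  have hs : Summable fun q : α × β => w q.1 * p q.1 q.2 :=
    (summable_prod_of_nonneg fun q => mul_nonneg (hw q.1) (hp q.1 q.2)).2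
      ⟨fun x => (fiber x).summable, by simpa only [fun x => (fiber x).tsum_eq] using hwa.summable⟩
  rw [hwa.unique (hs.hasSum.prod_fiberwise fiber)]
  exact hs.hasSum

end Summation

section L1

variable {S : Type*}

theorem Finsupp.summable_comp (φ : S →₀ ℤ) {F : ℤ → ℝ} (hF : F 0 = 0) :
    Summable fun x => F (φ x) :=
  summable_of_ne_finset_zero (s := φ.support) fun x hx => by
    rw [Finsupp.notMem_support_iff.mp hx, hF]

theorem tsum_abs_single (x : S) (c : ℤ) :
    ∑' i, ((|single x c i| : ℤ) : ℝ) = |(c : ℝ)| := by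
  rw [tsum_eq_single x fun i hi => by simp [single_eq_of_ne' (Ne.symm hi)]]
  simp

theorem tsum_abs_single_sub_single_le (x y : S) :
    ∑' i, ((|(single y 1 - single x 1 : S →₀ ℤ) i| : ℤ) : ℝ) ≤ 2 := by
  have hs (z : S) : Summable fun i => ((|single z (1 : ℤ) i| : ℤ) : ℝ) :=
    (single z 1).summable_comp (F := fun t => ((|t| : ℤ) : ℝ)) (by simp)
  have hd : Summable fun i => ((|(single y 1 - single x 1 : S →₀ ℤ) i| : ℤ) : ℝ) :=
    Finsupp.summable_comp (single y 1 - single x 1 : S →₀ ℤ) (F := fun t => ((|t| : ℤ) : ℝ))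
      (by simp)
  calc ∑' i, ((|(single y 1 - single x 1 : S →₀ ℤ) i| : ℤ) : ℝ)
      ≤ ∑' i, (((|single y (1 : ℤ) i| : ℤ) : ℝ) + ((|single x (1 : ℤ) i| : ℤ) : ℝ)) :=
        hd.tsum_le_tsum (fun i => by rw [Finsupp.sub_apply]; push_cast; exact abs_sub _ _)
          ((hs y).add (hs x))
    _ = 2 := by rw [(hs y).tsum_add (hs x), tsum_abs_single, tsum_abs_single]; norm_num

theorem tsum_add_tsum_le_tsum_sq_add_sq (φ ψ : S →₀ ℤ) :
    ∑' x, (φ x : ℝ) + ∑' x, (ψ x : ℝ) ≤ ∑' x, ((φ x : ℝ) ^ 2 + (ψ x : ℝ) ^ 2) := by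
  have hs (χ : S →₀ ℤ) : Summable fun x => (χ x : ℝ) :=
    χ.summable_comp (F := fun t => (t : ℝ)) Int.cast_zero
  have hs₂ (χ : S →₀ ℤ) : Summable fun x => (χ x : ℝ) ^ 2 :=
    χ.summable_comp (F := fun t => (t : ℝ) ^ 2) (by simp)
  have le_sq (n : ℤ) : (n : ℝ) ≤ (n : ℝ) ^ 2 := by exact_mod_cast Int.le_self_sq n
  rw [← (hs φ).tsum_add (hs ψ)]
  exact ((hs φ).add (hs ψ)).tsum_le_tsum (fun x => add_le_add (le_sq _) (le_sq _))
    ((hs₂ φ).add (hs₂ ψ))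

theorem two_mul_tsum_mul_le_tsum_sq_add_sq (φ ψ : S →₀ ℤ) :
    2 * ∑' x, (φ x : ℝ) * (ψ x : ℝ) ≤ ∑' x, ((φ x : ℝ) ^ 2 + (ψ x : ℝ) ^ 2) := by
  have hs : Summable fun x => 2 * ((φ x : ℝ) * (ψ x : ℝ)) :=
    ((φ * ψ).summable_comp (F := fun t => 2 * (t : ℝ)) (by simp)).congr
      fun x => by simp [Finsupp.mul_apply]
  have hs₂ (χ : S →₀ ℤ) : Summable fun x => (χ x : ℝ) ^ 2 :=
    χ.summable_comp (F := fun t => (t : ℝ) ^ 2) (by simp)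
  rw [← tsum_mul_left]
  exact hs.tsum_le_tsum (fun x => (mul_assoc 2 _ _).symm.trans_le (two_mul_le_add_sq _ _))
    ((hs₂ φ).add (hs₂ ψ))

end L1

def L1Lipschitz {S : Type*} (Cf : ℝ) (f : (S →₀ ℤ) → (S →₀ ℤ) → ℝ) : Prop :=
  ∀ φ ψ φ' ψ' : S →₀ ℤ,
    |f φ ψ - f φ' ψ'| ≤ Cf * ((∑' i, ((|φ i - φ' i| : ℤ) : ℝ)) + ∑' i, ((|ψ i - ψ' i| : ℤ) : ℝ))

namespace L1Lipschitz

variable {S : Type*} {Cf : ℝ} {f : (S →₀ ℤ) → (S →₀ ℤ) → ℝ}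

theorem abs_sub_le_left (hf : L1Lipschitz Cf f) (ψ φ d : S →₀ ℤ) :
    |f (φ + d) ψ - f φ ψ| ≤ |Cf| * ∑' i, ((|d i| : ℤ) : ℝ) := by
  have h := hf (φ + d) ψ φ ψ
  simp only [coe_add, Pi.add_apply, add_sub_cancel_left, sub_self, abs_zero, Int.cast_zero,
    tsum_zero, add_zero] at h
  exact h.trans (mul_le_mul_of_nonneg_right (le_abs_self Cf) (tsum_nonneg fun i => by positivity))

theorem abs_sub_le_right (hf : L1Lipschitz Cf f) (φ ψ d : S →₀ ℤ) :
    |f φ (ψ + d) - f φ ψ| ≤ |Cf| * ∑' i, ((|d i| : ℤ) : ℝ) := by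
  have h := hf φ (ψ + d) φ ψ
  simp only [coe_add, Pi.add_apply, add_sub_cancel_left, sub_self, abs_zero, Int.cast_zero,
    tsum_zero, zero_add] at h
  exact h.trans (mul_le_mul_of_nonneg_right (le_abs_self Cf) (tsum_nonneg fun i => by positivity))

end L1Lipschitz

section Generator

variable {S : Type*} {g : (S →₀ ℤ) → ℝ} {φ : S →₀ ℤ} {L : ℝ}

theorem abs_tsum_hop_le {p : S → S → ℝ} (hp : ∀ x y, 0 ≤ p x y) (hp₁ : ∀ x, HasSum (p x) 1)
    (hφ : ∀ x, 0 ≤ φ x) (hL : 0 ≤ L)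
    (hg : ∀ d, |g (φ + d) - g φ| ≤ L * ∑' i, ((|d i| : ℤ) : ℝ)) :
    |∑' q : S × S, (φ q.1 : ℝ) * p q.1 q.2 * (g (φ + single q.2 1 - single q.1 1) - g φ)|
      ≤ (∑' x, (φ x : ℝ)) * (2 * L) := by
  have hφℝ (x : S) : (0 : ℝ) ≤ φ x := by exact_mod_cast hφ x
  refine abs_tsum_mul_le_of_hasSum (fun q => mul_nonneg (hφℝ q.1) (hp q.1 q.2))
    (hasSum_mul_of_hasSum_one hφℝ
      (φ.summable_comp (F := fun t => (t : ℝ)) Int.cast_zero).hasSum hp hp₁) fun q => ?_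
  rw [add_sub_assoc]
  calc _ ≤ L * _ := hg _
    _ ≤ L * 2 := mul_le_mul_of_nonneg_left (tsum_abs_single_sub_single_le q.1 q.2) hL
    _ = 2 * L := mul_comm L 2

theorem abs_tsum_branching_le {ν : ℕ → ℝ} (hν : ∀ k, 0 ≤ ν k)
    (hνs : Summable fun k : ℕ => ν k * |(k : ℝ) - 1|)
    (hg : ∀ d, |g (φ + d) - g φ| ≤ L * ∑' i, ((|d i| : ℤ) : ℝ)) (x : S) :
    |∑' k : ℕ, ν k * (g (φ + single x ((k : ℤ) - 1)) - g φ)|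
      ≤ L * ∑' k : ℕ, ν k * |(k : ℝ) - 1| := by
  rw [← tsum_mul_left]
  refine (abs_tsum_mul_le_of_abs_le hν (b := fun k : ℕ => L * |(k : ℝ) - 1|) (fun k => ?_)
    (by simpa only [mul_left_comm] using hνs.mul_left L)).trans_eq
    (tsum_congr fun k => mul_left_comm _ _ _)
  have h := hg (single x ((k : ℤ) - 1))
  rwa [tsum_abs_single, Int.cast_sub, Int.cast_natCast, Int.cast_one] at h

end Generator

theorem summable_mul_abs_sub_one {ν : ℕ → ℝ} (hν : ∀ k, 0 ≤ ν k) (hνs : Summable ν)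
    (hν_mean : Summable fun k : ℕ => (k : ℝ) * ν k) :
    Summable fun k : ℕ => ν k * |(k : ℝ) - 1| :=
  (hν_mean.add hνs).of_nonneg_of_le (fun k => mul_nonneg (hν k) (abs_nonneg _)) fun k => by
    have : |(k : ℝ) - 1| ≤ k + 1 := (abs_sub _ _).trans (by simp)
    nlinarith [hν k]

theorem abs_mul_add_mul_add_le {κ γ T₁ T₂ T₃ T₄ a b c d : ℝ} (h₁ : |T₁| ≤ a) (h₂ : |T₂| ≤ b)
    (h₃ : |T₃| ≤ c) (h₄ : |T₄| ≤ d) :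
    |κ * T₁ + κ * T₂ + γ * T₃ + γ * T₄| ≤ |κ| * (a + b) + |γ| * (c + d) :=
  calc |κ * T₁ + κ * T₂ + γ * T₃ + γ * T₄| = |κ * (T₁ + T₂) + γ * (T₃ + T₄)| := by ring_nf
    _ ≤ |κ| * |T₁ + T₂| + |γ| * |T₃ + T₄| := by rw [← abs_mul, ← abs_mul]; exact abs_add_le _ _
    _ ≤ |κ| * (a + b) + |γ| * (c + d) := by
      gcongr
      exacts [(abs_add_le _ _).trans (add_le_add h₁ h₂), (abs_add_le _ _).trans (add_le_add h₃ h₄)]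

theorem generator_bound_general {S : Type*}
    (κ γ : ℝ)
    (p : S → S → ℝ)
    (hp_nonneg : ∀ x y, 0 ≤ p x y)
    (hp_sum : ∀ x, ∑' y, p x y = 1)
    (ν : ℕ → ℝ) (hν_nonneg : ∀ k, 0 ≤ ν k) (hν_sum : ∑' k, ν k = 1)
    (hν_mean : Summable fun k : ℕ => (k : ℝ) * ν k)
    (f : (S →₀ ℤ) → (S →₀ ℤ) → ℝ) (Cf : ℝ)
    (hf : ∀ φ ψ φ' ψ' : S →₀ ℤ,
      |f φ ψ - f φ' ψ'| ≤
        Cf * ((∑' i, ((|φ i - φ' i| : ℤ) : ℝ)) + ∑' i, ((|ψ i - ψ' i| : ℤ) : ℝ))) :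
    ∃ C : ℝ,
      ∀ φ ψ : S →₀ ℤ, (∀ x, 0 ≤ φ x) → (∀ x, 0 ≤ ψ x) →
        |κ * (∑' q : S × S, (φ q.1 : ℝ) * p q.1 q.2 *
              (f (φ + Finsupp.single q.2 1 - Finsupp.single q.1 1) ψ - f φ ψ))
          + κ * (∑' q : S × S, (ψ q.1 : ℝ) * p q.1 q.2 *
              (f φ (ψ + Finsupp.single q.2 1 - Finsupp.single q.1 1) - f φ ψ))
          + γ * (∑' x : S, (φ x : ℝ) * (ψ x : ℝ) *
              ∑' k : ℕ, ν k * (f (φ + Finsupp.single x ((k : ℤ) - 1)) ψ - f φ ψ))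
          + γ * (∑' x : S, (φ x : ℝ) * (ψ x : ℝ) *
              ∑' k : ℕ, ν k * (f φ (ψ + Finsupp.single x ((k : ℤ) - 1)) - f φ ψ))|
          ≤ C * ∑' i, ((φ i : ℝ) ^ 2 + (ψ i : ℝ) ^ 2) := by
  have hνs : Summable ν := by
    by_contra h
    exact zero_ne_one (tsum_eq_zero_of_not_summable h ▸ hν_sum)
  have hp₁ (x : S) : HasSum (p x) 1 := by
    have hs : Summable (p x) := by
      by_contra h
      exact zero_ne_one (tsum_eq_zero_of_not_summable h ▸ hp_sum x)
    simpa only [hp_sum x] using hs.hasSum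
  have hM := summable_mul_abs_sub_one hν_nonneg hνs hν_mean
  set M := ∑' k : ℕ, ν k * |(k : ℝ) - 1|
  refine ⟨|Cf| * (2 * |κ| + |γ| * M), fun φ ψ hφ hψ => ?_⟩
  have hL : L1Lipschitz Cf f := hf
  have hφψ (x : S) : (0 : ℝ) ≤ φ x * ψ x :=
    mul_nonneg (by exact_mod_cast hφ x) (by exact_mod_cast hψ x)
  have hsφψ := ((φ * ψ).summable_comp (F := fun t => (t : ℝ)) Int.cast_zero).hasSum
  simp only [Finsupp.mul_apply, Int.cast_mul] at hsφψ
  refine (abs_mul_add_mul_add_le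
    (abs_tsum_hop_le (g := (f · ψ)) hp_nonneg hp₁ hφ (abs_nonneg Cf) (hL.abs_sub_le_left ψ φ))
    (abs_tsum_hop_le (g := f φ) hp_nonneg hp₁ hψ (abs_nonneg Cf) (hL.abs_sub_le_right φ ψ))
    (abs_tsum_mul_le_of_hasSum hφψ hsφψ
      (abs_tsum_branching_le (g := (f · ψ)) hν_nonneg hM (hL.abs_sub_le_left ψ φ)))
    (abs_tsum_mul_le_of_hasSum hφψ hsφψ
      (abs_tsum_branching_le (g := f φ) hν_nonneg hM (hL.abs_sub_le_right φ ψ)))).trans ?_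
  have hM₀ : 0 ≤ M := tsum_nonneg fun k => mul_nonneg (hν_nonneg k) (abs_nonneg _)
  calc _ = |Cf| * (2 * |κ| * (∑' x, (φ x : ℝ) + ∑' x, (ψ x : ℝ))
        + |γ| * M * (2 * ∑' x, (φ x : ℝ) * ψ x)) := by ring
    _ ≤ |Cf| * (2 * |κ| * ∑' x, ((φ x : ℝ) ^ 2 + (ψ x : ℝ) ^ 2)
        + |γ| * M * ∑' x, ((φ x : ℝ) ^ 2 + (ψ x : ℝ) ^ 2)) := by
      gcongr
      exacts [tsum_add_tsum_le_tsum_sq_add_sq φ ψ, two_mul_tsum_mul_le_tsum_sq_add_sq φ ψ]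
    _ = _ := by ring

theorem generator_bound {S : Type*} [Countable S]
    (κ γ : ℝ) (hκ : 0 < κ) (hγ : 0 < γ)
    (p : S → S → ℝ)
    (hp_nonneg : ∀ x y, 0 ≤ p x y)
    (hp_symm : ∀ x y, p x y = p y x)
    (hp_sum : ∀ x, ∑' y, p x y = 1)
    (ν : ℕ → ℝ) (hν_nonneg : ∀ k, 0 ≤ ν k) (hν_sum : ∑' k, ν k = 1)
    (hν_mean : Summable fun k : ℕ => (k : ℝ) * ν k)
    (f : (S →₀ ℤ) → (S →₀ ℤ) → ℝ) (Cf : ℝ)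
    (hf : ∀ φ ψ φ' ψ' : S →₀ ℤ,
      |f φ ψ - f φ' ψ'| ≤
        Cf * ((∑' i, ((|φ i - φ' i| : ℤ) : ℝ)) + ∑' i, ((|ψ i - ψ' i| : ℤ) : ℝ))) :
    ∃ C : ℝ,
      ∀ φ ψ : S →₀ ℤ, (∀ x, 0 ≤ φ x) → (∀ x, 0 ≤ ψ x) →
        |κ * (∑' q : S × S, (φ q.1 : ℝ) * p q.1 q.2 *
              (f (φ + Finsupp.single q.2 1 - Finsupp.single q.1 1) ψ - f φ ψ))
          + κ * (∑' q : S × S, (ψ q.1 : ℝ) * p q.1 q.2 *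
              (f φ (ψ + Finsupp.single q.2 1 - Finsupp.single q.1 1) - f φ ψ))
          + γ * (∑' x : S, (φ x : ℝ) * (ψ x : ℝ) *
              ∑' k : ℕ, ν k * (f (φ + Finsupp.single x ((k : ℤ) - 1)) ψ - f φ ψ))
          + γ * (∑' x : S, (φ x : ℝ) * (ψ x : ℝ) *
              ∑' k : ℕ, ν k * (f φ (ψ + Finsupp.single x ((k : ℤ) - 1)) - f φ ψ))|
          ≤ C * ∑' i, ((φ i : ℝ) ^ 2 + (ψ i : ℝ) ^ 2) :=
  generator_bound_general κ γ p hp_nonneg hp_sum ν hν_nonneg hν_sum hν_mean f Cf hf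
end

section
/- Let m ≥ 1 be an integer, assume the branching law ν is critical (Σ_{k≥0} k ν_k = 1) and has finite m-th moment (Σ_{k≥0} k^m ν_k < ∞). Then for all finitely supported φ, ψ : S → ℕ one has |L⁽²⁾h_m(φ,ψ)| ≤ (5 κ c_m + c'_m) h_m(φ,ψ), where c_m = 2^m − 1 and c'_m = 3 γ Σ_{j=2}^{m} binom(m,j) Σ_{k≥0} ν_k |k−1|^j. -/
/-!
Write `F χ = ∑ₓ |χ x| ^ m`, so that `h_m(φ, ψ) = F φ + F ψ`, and bound the four terms separately.

A jump `x → y` changes `F χ` by `((a - 1)^m - a^m) + ((b + 1)^m - b^m)`, where `a = χ x ≥ 1` and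
`b = χ y`. Expanding binomially bounds `a` times this by `(2^m - 1) (4 a^m + b^m)`. Summing this
against the symmetric stochastic kernel `p` turns `4 a^m + b^m` into `5 F χ`.

A branching at `x` changes `F χ` by `(a + k - 1)^m - a^m = ∑_{j ≥ 1} C(m, j) a^(m-j) (k - 1)^j`.
Averaged over `ν`, criticality kills the `j = 1` term, and for `j ≥ 2` the rate satisfies
`a b a^(m-j) ≤ a^(m-1) b ≤ a^m + b^m`.
-/

open Finset

lemma summable_of_tsum_ne_zero {ι : Type*} {f : ι → ℝ} (h : ∑' i, f i ≠ 0) : Summable f := by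
  by_contra hf
  exact h (tsum_eq_zero_of_not_summable hf)

lemma pow_le_pow_add_one {b : ℝ} (hb : 0 ≤ b) {j n : ℕ} (hjn : j ≤ n) : b ^ j ≤ b ^ n + 1 := by
  rcases le_total b 1 with h | h
  · linarith [pow_le_one₀ hb h (n := j), pow_nonneg hb n]
  · linarith [pow_le_pow_right₀ h hjn]

lemma abs_sub_one_pow_le {x : ℝ} (hx : 0 ≤ x) {j m : ℕ} (hjm : j ≤ m) :
    |x - 1| ^ j ≤ x ^ m + 1 := by
  rcases le_total x 1 with h | h
  · have : |x - 1| ≤ 1 := abs_le.2 ⟨by linarith, by linarith⟩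
    linarith [pow_le_one₀ (abs_nonneg _) this (n := j), pow_nonneg hx m]
  · rw [abs_of_nonneg (sub_nonneg.2 h)]
    linarith [pow_le_pow_left₀ (sub_nonneg.2 h) (sub_le_self x zero_le_one) j,
      pow_le_pow_right₀ h hjm]

lemma pow_mul_le_pow_succ_add_pow_succ {a b : ℝ} (ha : 0 ≤ a) (hb : 0 ≤ b) (n : ℕ) :
    a ^ n * b ≤ a ^ (n + 1) + b ^ (n + 1) := by
  rcases le_total a b with h | h
  · calc a ^ n * b ≤ b ^ n * b := by gcongr
      _ ≤ a ^ (n + 1) + b ^ (n + 1) := by rw [← pow_succ]; linarith [pow_nonneg ha (n + 1)]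
  · calc a ^ n * b ≤ a ^ n * a := by gcongr
      _ ≤ a ^ (n + 1) + b ^ (n + 1) := by rw [← pow_succ]; linarith [pow_nonneg hb (n + 1)]

lemma add_pow_sub_pow_eq_sum {R : Type*} [CommRing R] (a t : R) (m : ℕ) :
    (a + t) ^ m - a ^ m = ∑ j ∈ Icc 1 m, (m.choose j : R) * a ^ (m - j) * t ^ j := by
  rw [add_comm a t, add_pow, sum_range_succ', ← Ico_add_one_right_eq_Icc, sum_Ico_eq_sum_range,
    add_tsub_cancel_right]
  simp only [Nat.choose_zero_right, pow_zero, Nat.sub_zero, Nat.cast_one, mul_one, one_mul,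
    add_sub_cancel_right]
  exact sum_congr rfl fun j _ => by rw [add_comm 1 j]; ring

lemma two_pow_sub_one_nonneg (m : ℕ) : (0 : ℝ) ≤ 2 ^ m - 1 :=
  sub_nonneg.2 (one_le_pow₀ one_le_two)

lemma pow_add_one_sub_pow_le {b : ℝ} (hb : 0 ≤ b) (n : ℕ) :
    (b + 1) ^ (n + 1) - b ^ (n + 1) ≤ (2 ^ (n + 1) - 1) * (b ^ n + 1) := by
  have hchoose : ∑ j ∈ Icc 1 (n + 1), ((n + 1).choose j : ℝ) = 2 ^ (n + 1) - 1 := by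
    have := add_pow_sub_pow_eq_sum (1 : ℝ) 1 (n + 1)
    simp only [one_pow, mul_one] at this
    rw [← this]; norm_num
  rw [add_pow_sub_pow_eq_sum, ← hchoose, sum_mul]
  refine sum_le_sum fun j hj => ?_
  have hj' : (n + 1) - j ≤ n := by have := (mem_Icc.1 hj).1; omega
  simp only [one_pow, mul_one]
  exact mul_le_mul_of_nonneg_left (pow_le_pow_add_one hb hj') (Nat.cast_nonneg _)

lemma mul_abs_pow_move_le {a b : ℝ} (ha : 1 ≤ a) (hb : 0 ≤ b) (n : ℕ) :
    a * |((a - 1) ^ (n + 1) - a ^ (n + 1)) + ((b + 1) ^ (n + 1) - b ^ (n + 1))| ≤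
      (2 ^ (n + 1) - 1) * (4 * a ^ (n + 1) + b ^ (n + 1)) := by
  have hC := two_pow_sub_one_nonneg (n + 1)
  have hloss : a ^ (n + 1) - (a - 1) ^ (n + 1) ≤ (2 ^ (n + 1) - 1) * (a ^ n + 1) := by
    have h := pow_add_one_sub_pow_le (sub_nonneg.2 ha) n
    rw [sub_add_cancel] at h
    exact h.trans (by gcongr; linarith)
  have hgain := pow_add_one_sub_pow_le hb n
  have hloss0 : (a - 1) ^ (n + 1) ≤ a ^ (n + 1) := pow_le_pow_left₀ (by linarith) (by linarith) _
  have hgain0 : b ^ (n + 1) ≤ (b + 1) ^ (n + 1) := pow_le_pow_left₀ hb (by linarith) _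
  have hab := pow_mul_le_pow_succ_add_pow_succ hb (by linarith : 0 ≤ a) n
  have ha' : a ≤ a ^ (n + 1) := le_self_pow₀ ha (Nat.succ_ne_zero n)
  calc _ ≤ a * ((2 ^ (n + 1) - 1) * (a ^ n + 1) + (2 ^ (n + 1) - 1) * (b ^ n + 1)) := by
        gcongr
        exact abs_le.2 ⟨by linarith, by linarith⟩
    _ = (2 ^ (n + 1) - 1) * (a ^ n * a + 2 * a + b ^ n * a) := by ring
    _ ≤ (2 ^ (n + 1) - 1) * (4 * a ^ (n + 1) + b ^ (n + 1)) := by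
        refine mul_le_mul_of_nonneg_left ?_ hC
        rw [← pow_succ]
        linarith

lemma mul_mul_pow_sub_le {a b : ℝ} (ha : 1 ≤ a) (hb : 0 ≤ b) {j m : ℕ} (hj : 2 ≤ j)
    (hjm : j ≤ m) : a * b * a ^ (m - j) ≤ a ^ m + b ^ m := by
  obtain ⟨n, rfl⟩ : ∃ n, m = n + 1 := ⟨m - 1, by omega⟩
  calc a * b * a ^ (n + 1 - j) = a ^ (n + 1 - j + 1) * b := by rw [pow_succ]; ring
    _ ≤ a ^ n * b := by gcongr; omega
    _ ≤ a ^ (n + 1) + b ^ (n + 1) := pow_mul_le_pow_succ_add_pow_succ (by linarith) hb n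

lemma abs_mul_mul_sum_choose_le {a b : ℝ} (ha : 1 ≤ a) (hb : 0 ≤ b) (m : ℕ) {μ M : ℕ → ℝ}
    (hμM : ∀ j ∈ Icc 2 m, |μ j| ≤ M j) :
    |a * b * ∑ j ∈ Icc 2 m, (m.choose j : ℝ) * a ^ (m - j) * μ j| ≤
      (∑ j ∈ Icc 2 m, (m.choose j : ℝ) * M j) * (a ^ m + b ^ m) := by
  rw [mul_sum, sum_mul]
  refine (abs_sum_le_sum_abs _ _).trans (sum_le_sum fun j hj => ?_)
  obtain ⟨hj, hjm⟩ := mem_Icc.1 hj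
  have hμ := hμM j (mem_Icc.2 ⟨hj, hjm⟩)
  have ha0 : 0 ≤ a := by linarith
  calc |a * b * ((m.choose j : ℝ) * a ^ (m - j) * μ j)|
      = (m.choose j : ℝ) * |μ j| * (a * b * a ^ (m - j)) := by
        rw [show a * b * ((m.choose j : ℝ) * a ^ (m - j) * μ j) =
          (m.choose j : ℝ) * (a * b * a ^ (m - j)) * μ j by ring, abs_mul,
          abs_of_nonneg (by positivity)]
        ring
    _ ≤ (m.choose j : ℝ) * M j * (a ^ m + b ^ m) := by
        have hM : 0 ≤ M j := (abs_nonneg _).trans hμ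
        gcongr
        exact mul_mul_pow_sub_le ha hb hj hjm

lemma abs_tsum_le_of_hasSum {ι : Type*} {f g : ι → ℝ} {a : ℝ} (hg : HasSum g a)
    (h : ∀ i, |f i| ≤ g i) : |∑' i, f i| ≤ a :=
  tsum_of_norm_bounded (f := f) hg h

lemma summable_mul_sub_one_pow {ν : ℕ → ℝ} (hν_nonneg : ∀ k, 0 ≤ ν k) (hν : Summable ν) {m : ℕ}
    (hν_moment : Summable fun k : ℕ => (k : ℝ) ^ m * ν k) {j : ℕ} (hjm : j ≤ m) :
    Summable fun k : ℕ => ν k * ((k : ℝ) - 1) ^ j := by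
  refine Summable.of_norm_bounded (hν_moment.add hν) fun k => ?_
  rw [Real.norm_eq_abs, abs_mul, abs_of_nonneg (hν_nonneg k), abs_pow]
  nlinarith [abs_sub_one_pow_le (Nat.cast_nonneg k) hjm (j := j) (m := m), hν_nonneg k]

lemma tsum_mul_sub_one_eq_zero {ν : ℕ → ℝ} (hν : Summable ν) (hν_sum : ∑' k, ν k = 1)
    (hν_mean : Summable (fun k : ℕ => (k : ℝ) * ν k) ∧ ∑' k : ℕ, (k : ℝ) * ν k = 1) :
    ∑' k : ℕ, ν k * ((k : ℝ) - 1) = 0 := by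
  simp_rw [mul_sub_one, mul_comm (ν _)]
  rw [hν_mean.1.tsum_sub hν, hν_mean.2, hν_sum, sub_self]

lemma tsum_mul_add_pow_sub_pow {ν t : ℕ → ℝ} {m : ℕ}
    (hsum : ∀ j ≤ m, Summable fun k => ν k * t k ^ j) (hmean : ∑' k, ν k * t k = 0) (a : ℝ) :
    ∑' k, ν k * ((a + t k) ^ m - a ^ m) =
      ∑ j ∈ Icc 2 m, (m.choose j : ℝ) * a ^ (m - j) * ∑' k, ν k * t k ^ j := by
  have hterm : ∀ j ∈ Icc 1 m,
      ∑' k, ν k * ((m.choose j : ℝ) * a ^ (m - j) * t k ^ j) =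
        (m.choose j : ℝ) * a ^ (m - j) * ∑' k, ν k * t k ^ j := fun j _ => by
    rw [← tsum_mul_left]; exact tsum_congr fun k => by ring
  simp_rw [add_pow_sub_pow_eq_sum, mul_sum]
  rw [Summable.tsum_finsetSum fun j hj => ?_, sum_congr rfl hterm]
  · refine (sum_subset (Icc_subset_Icc_left one_le_two) fun j hj hj2 => ?_).symm
    obtain rfl : j = 1 := by simp only [mem_Icc] at hj hj2; omega
    simp [hmean]
  · exact ((hsum j (mem_Icc.1 hj).2).mul_left ((m.choose j : ℝ) * a ^ (m - j))).congr
      fun k => by ring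

lemma hasSum_mul_fst_of_tsum_eq_one {S : Type*} {p : S → S → ℝ} (hp_nonneg : ∀ x y, 0 ≤ p x y)
    (hp_sum : ∀ x, ∑' y, p x y = 1) {f : S → ℝ} (hf : ∀ x, 0 ≤ f x) (hfs : Summable f) :
    HasSum (fun q : S × S => f q.1 * p q.1 q.2) (∑' x, f x) := by
  have hfib : ∀ x, Summable fun y => f x * p x y := fun x =>
    (summable_of_tsum_ne_zero (by rw [hp_sum x]; exact one_ne_zero)).mul_left (f x)
  have hfib_sum : ∀ x, ∑' y, f x * p x y = f x := fun x => by rw [tsum_mul_left, hp_sum, mul_one]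
  have hs : Summable fun q : S × S => f q.1 * p q.1 q.2 :=
    (summable_prod_of_nonneg fun q => mul_nonneg (hf _) (hp_nonneg _ _)).2
      ⟨hfib, by simpa only [hfib_sum] using hfs⟩
  convert hs.hasSum using 1
  rw [hs.tsum_prod' hfib]
  exact tsum_congr fun x => (hfib_sum x).symm

lemma hasSum_mul_snd_of_symm {S : Type*} {p : S → S → ℝ} (hp_nonneg : ∀ x y, 0 ≤ p x y)
    (hp_symm : ∀ x y, p x y = p y x) (hp_sum : ∀ x, ∑' y, p x y = 1) {f : S → ℝ}
    (hf : ∀ x, 0 ≤ f x) (hfs : Summable f) :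
    HasSum (fun q : S × S => f q.2 * p q.1 q.2) (∑' x, f x) := by
  rw [← (Equiv.prodComm S S).hasSum_iff]
  simpa only [Function.comp_def, Equiv.prodComm_apply, Prod.fst_swap, Prod.snd_swap, hp_symm]
    using hasSum_mul_fst_of_tsum_eq_one hp_nonneg hp_sum hf hfs

noncomputable def absPowSum {S : Type*} (m : ℕ) (g : S →₀ ℤ) : ℝ :=
  ∑' z, ((|g z| : ℤ) : ℝ) ^ m

section absPowSum

variable {S : Type*} {m : ℕ}

lemma summable_abs_pow (hm : m ≠ 0) (g : S →₀ ℤ) :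
    Summable fun z => ((|g z| : ℤ) : ℝ) ^ m :=
  summable_of_ne_finset_zero (s := g.support) fun z hz => by
    simp [Finsupp.notMem_support_iff.1 hz, hm]

lemma absPowSum_nonneg (g : S →₀ ℤ) : 0 ≤ absPowSum m g :=
  tsum_nonneg fun _ => by positivity

lemma absPowSum_of_nonneg {g : S →₀ ℤ} (hg : ∀ z, 0 ≤ g z) :
    absPowSum m g = ∑' z, (g z : ℝ) ^ m :=
  tsum_congr fun z => by rw [abs_of_nonneg (hg z)]

lemma summable_pow_of_nonneg (hm : m ≠ 0) {g : S →₀ ℤ} (hg : ∀ z, 0 ≤ g z) :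
    Summable fun z => (g z : ℝ) ^ m :=
  (summable_abs_pow hm g).congr fun z => by rw [abs_of_nonneg (hg z)]

lemma absPowSum_add_sub (hm : m ≠ 0) (g η : S →₀ ℤ) {T : Finset S} (hT : η.support ⊆ T) :
    absPowSum m (g + η) - absPowSum m g =
      ∑ z ∈ T, (((|(g + η) z| : ℤ) : ℝ) ^ m - ((|g z| : ℤ) : ℝ) ^ m) := by
  rw [absPowSum, absPowSum, ← (summable_abs_pow hm _).tsum_sub (summable_abs_pow hm _)]
  refine tsum_eq_sum fun z hz => ?_
  rw [Finsupp.add_apply, Finsupp.notMem_support_iff.1 (fun h => hz (hT h)), add_zero, sub_self]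

lemma absPowSum_add_single_sub (hm : m ≠ 0) (g : S →₀ ℤ) (x : S) (t : ℤ) :
    absPowSum m (g + Finsupp.single x t) - absPowSum m g =
      |(g x : ℝ) + t| ^ m - |(g x : ℝ)| ^ m := by
  rw [absPowSum_add_sub hm g _ Finsupp.support_single_subset, sum_singleton]
  simp

lemma absPowSum_move_sub (hm : m ≠ 0) (g : S →₀ ℤ) {x y : S} (hxy : x ≠ y) :
    absPowSum m (g + Finsupp.single y 1 - Finsupp.single x 1) - absPowSum m g =
      (|(g x : ℝ) - 1| ^ m - |(g x : ℝ)| ^ m) + (|(g y : ℝ) + 1| ^ m - |(g y : ℝ)| ^ m) := by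
  classical
  have hsupp : (Finsupp.single y (1 : ℤ) - Finsupp.single x 1).support ⊆ {x, y} := fun z hz => by
    by_contra h
    simp only [mem_insert, mem_singleton, not_or] at h
    simp [Ne.symm h.1, Ne.symm h.2] at hz
  rw [add_sub_assoc, absPowSum_add_sub hm g _ hsupp, sum_pair hxy]
  simp [hxy, Ne.symm hxy, sub_eq_add_neg]

end absPowSum

section generator

variable {S : Type*} {m : ℕ}

lemma abs_mul_absPowSum_move_sub_le {χ : S →₀ ℤ} (hχ : ∀ z, 0 ≤ χ z) (x y : S) (n : ℕ) :
    |(χ x : ℝ) * (absPowSum (n + 1) (χ + Finsupp.single y 1 - Finsupp.single x 1) -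
        absPowSum (n + 1) χ)| ≤
      (2 ^ (n + 1) - 1) * (4 * (χ x : ℝ) ^ (n + 1) + (χ y : ℝ) ^ (n + 1)) := by
  have hχ' : ∀ z, (0 : ℝ) ≤ χ z := fun z => Int.cast_nonneg (hχ z)
  have hrhs : 0 ≤ (2 ^ (n + 1) - 1) * (4 * (χ x : ℝ) ^ (n + 1) + (χ y : ℝ) ^ (n + 1)) :=
    mul_nonneg (two_pow_sub_one_nonneg _) (by positivity [hχ' x, hχ' y])
  rcases (hχ x).eq_or_lt with h0 | h1
  · simpa [← h0] using hrhs
  rcases eq_or_ne x y with rfl | hxy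
  · simpa using hrhs
  have ha : (1 : ℝ) ≤ χ x := by exact_mod_cast h1
  rw [absPowSum_move_sub n.succ_ne_zero χ hxy, abs_of_nonneg (by linarith : (0 : ℝ) ≤ χ x - 1),
    abs_of_nonneg (hχ' x), abs_of_nonneg (by linarith [hχ' y] : (0 : ℝ) ≤ χ y + 1),
    abs_of_nonneg (hχ' y), abs_mul, abs_of_nonneg (hχ' x)]
  exact mul_abs_pow_move_le ha (hχ' y) n

theorem abs_tsum_migration_le (hm : m ≠ 0) {p : S → S → ℝ} (hp_nonneg : ∀ x y, 0 ≤ p x y)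
    (hp_symm : ∀ x y, p x y = p y x) (hp_sum : ∀ x, ∑' y, p x y = 1)
    {χ : S →₀ ℤ} (hχ : ∀ z, 0 ≤ χ z) :
    |∑' q : S × S, (χ q.1 : ℝ) * p q.1 q.2 *
        (absPowSum m (χ + Finsupp.single q.2 1 - Finsupp.single q.1 1) - absPowSum m χ)| ≤
      5 * (2 ^ m - 1) * absPowSum m χ := by
  obtain ⟨n, rfl⟩ : ∃ n, m = n + 1 := ⟨m - 1, by omega⟩
  have hf : ∀ z, (0 : ℝ) ≤ (χ z : ℝ) ^ (n + 1) := fun z => pow_nonneg (Int.cast_nonneg (hχ z)) _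
  have hfs := summable_pow_of_nonneg hm hχ
  have hbound : HasSum (fun q : S × S =>
      p q.1 q.2 * ((2 ^ (n + 1) - 1) * (4 * (χ q.1 : ℝ) ^ (n + 1) + (χ q.2 : ℝ) ^ (n + 1))))
      (5 * (2 ^ (n + 1) - 1) * absPowSum (n + 1) χ) := by
    have := (((hasSum_mul_fst_of_tsum_eq_one hp_nonneg hp_sum hf hfs).mul_left 4).add
      (hasSum_mul_snd_of_symm hp_nonneg hp_symm hp_sum hf hfs)).mul_left (2 ^ (n + 1) - 1)
    rw [absPowSum_of_nonneg hχ, show ∀ T : ℝ, 5 * (2 ^ (n + 1) - 1) * T =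
      (2 ^ (n + 1) - 1) * (4 * T + T) from fun T => by ring]
    exact this.congr_fun fun q => by ring
  refine abs_tsum_le_of_hasSum hbound fun q => ?_
  rw [mul_right_comm, abs_mul, abs_of_nonneg (hp_nonneg _ _), mul_comm]
  exact mul_le_mul_of_nonneg_left (abs_mul_absPowSum_move_sub_le hχ q.1 q.2 n) (hp_nonneg _ _)

theorem abs_tsum_branching_le_s3 (hm : m ≠ 0) {ν : ℕ → ℝ} (hν_nonneg : ∀ k, 0 ≤ ν k)
    (hsum : ∀ j ≤ m, Summable fun k : ℕ => ν k * ((k : ℝ) - 1) ^ j)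
    (hmean : ∑' k : ℕ, ν k * ((k : ℝ) - 1) = 0)
    {χ ξ : S →₀ ℤ} (hχ : ∀ z, 0 ≤ χ z) (hξ : ∀ z, 0 ≤ ξ z) :
    |∑' x, (χ x : ℝ) * (ξ x : ℝ) *
        ∑' k : ℕ, ν k * (absPowSum m (χ + Finsupp.single x ((k : ℤ) - 1)) - absPowSum m χ)| ≤
      (∑ j ∈ Icc 2 m, (m.choose j : ℝ) * ∑' k : ℕ, ν k * |(k : ℝ) - 1| ^ j) *
        (absPowSum m χ + absPowSum m ξ) := by
  set B := ∑ j ∈ Icc 2 m, (m.choose j : ℝ) * ∑' k : ℕ, ν k * |(k : ℝ) - 1| ^ j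
  have hχ' : ∀ z, (0 : ℝ) ≤ χ z := fun z => Int.cast_nonneg (hχ z)
  have hξ' : ∀ z, (0 : ℝ) ≤ ξ z := fun z => Int.cast_nonneg (hξ z)
  have hB : 0 ≤ B := sum_nonneg fun j _ =>
    mul_nonneg (Nat.cast_nonneg _) (tsum_nonneg fun k => mul_nonneg (hν_nonneg k) (by positivity))
  have hbound : HasSum (fun x => B * ((χ x : ℝ) ^ m + (ξ x : ℝ) ^ m))
      (B * (absPowSum m χ + absPowSum m ξ)) := by
    rw [absPowSum_of_nonneg hχ, absPowSum_of_nonneg hξ]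
    exact ((summable_pow_of_nonneg hm hχ).hasSum.add
      (summable_pow_of_nonneg hm hξ).hasSum).mul_left B
  refine abs_tsum_le_of_hasSum hbound fun x => ?_
  rcases (hχ x).eq_or_lt with h0 | h1
  · simpa [← h0] using mul_nonneg hB (by positivity [hχ' x, hξ' x])
  have ha : (1 : ℝ) ≤ χ x := by exact_mod_cast h1
  have hexpand :
      ∑' k : ℕ, ν k * (absPowSum m (χ + Finsupp.single x ((k : ℤ) - 1)) - absPowSum m χ) =
        ∑ j ∈ Icc 2 m, (m.choose j : ℝ) * (χ x : ℝ) ^ (m - j) *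
          ∑' k : ℕ, ν k * ((k : ℝ) - 1) ^ j := by
    rw [← tsum_mul_add_pow_sub_pow hsum hmean]
    refine tsum_congr fun k => ?_
    rw [absPowSum_add_single_sub hm, abs_of_nonneg (hχ' x)]
    push_cast
    rw [abs_of_nonneg (by linarith [(Nat.cast_nonneg k : (0 : ℝ) ≤ k)])]
  rw [hexpand]
  refine abs_mul_mul_sum_choose_le ha (hξ' x) m fun j hj => ?_
  have habs : ∀ k : ℕ, |ν k * ((k : ℝ) - 1) ^ j| = ν k * |(k : ℝ) - 1| ^ j := fun k => by
    rw [abs_mul, abs_of_nonneg (hν_nonneg k), abs_pow]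
  exact abs_tsum_le_of_hasSum ((hsum j (mem_Icc.1 hj).2).abs.congr habs).hasSum fun k => (habs k).le

end generator

theorem generator_bound_hm_general {S : Type*}
    (κ γ : ℝ) (hκ : 0 < κ) (hγ : 0 < γ)
    (p : S → S → ℝ)
    (hp_nonneg : ∀ x y, 0 ≤ p x y)
    (hp_symm : ∀ x y, p x y = p y x)
    (hp_sum : ∀ x, ∑' y, p x y = 1)
    (ν : ℕ → ℝ) (hν_nonneg : ∀ k, 0 ≤ ν k) (hν_sum : ∑' k, ν k = 1)
    (m : ℕ) (hm1 : 1 ≤ m)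
    (hν_critical : Summable (fun k : ℕ => (k : ℝ) * ν k) ∧ ∑' k : ℕ, (k : ℝ) * ν k = 1)
    (hν_moment : Summable fun k : ℕ => (k : ℝ) ^ m * ν k)
    (hm : (S →₀ ℤ) → (S →₀ ℤ) → ℝ)
    (hhm : ∀ φ ψ : S →₀ ℤ,
      hm φ ψ = ∑' x : S, (((|φ x| : ℤ) : ℝ) ^ m + ((|ψ x| : ℤ) : ℝ) ^ m))
    (φ ψ : S →₀ ℤ) (hφ : ∀ x, 0 ≤ φ x) (hψ : ∀ x, 0 ≤ ψ x) :
    |κ * (∑' q : S × S, (φ q.1 : ℝ) * p q.1 q.2 *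
          (hm (φ + Finsupp.single q.2 1 - Finsupp.single q.1 1) ψ - hm φ ψ))
      + κ * (∑' q : S × S, (ψ q.1 : ℝ) * p q.1 q.2 *
          (hm φ (ψ + Finsupp.single q.2 1 - Finsupp.single q.1 1) - hm φ ψ))
      + γ * (∑' x : S, (φ x : ℝ) * (ψ x : ℝ) *
          ∑' k : ℕ, ν k * (hm (φ + Finsupp.single x ((k : ℤ) - 1)) ψ - hm φ ψ))
      + γ * (∑' x : S, (φ x : ℝ) * (ψ x : ℝ) *
          ∑' k : ℕ, ν k * (hm φ (ψ + Finsupp.single x ((k : ℤ) - 1)) - hm φ ψ))|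
      ≤ (5 * κ * ((2 : ℝ) ^ m - 1)
          + 3 * γ * ∑ j ∈ Finset.Icc 2 m,
              (m.choose j : ℝ) * ∑' k : ℕ, ν k * |(k : ℝ) - 1| ^ j)
        * hm φ ψ := by
  have hm0 : m ≠ 0 := by omega
  have hν : Summable ν := summable_of_tsum_ne_zero (by rw [hν_sum]; exact one_ne_zero)
  have hsum := fun j (hj : j ≤ m) => summable_mul_sub_one_pow hν_nonneg hν hν_moment hj
  have hmean := tsum_mul_sub_one_eq_zero hν hν_sum hν_critical
  have hhm' : ∀ φ ψ, hm φ ψ = absPowSum m φ + absPowSum m ψ := fun φ ψ =>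
    (hhm φ ψ).trans ((summable_abs_pow hm0 φ).tsum_add (summable_abs_pow hm0 ψ))
  simp only [hhm', add_sub_add_right_eq_sub, add_sub_add_left_eq_sub]
  have hφψ := abs_tsum_branching_le_s3 hm0 hν_nonneg hsum hmean hφ hψ
  have hψφ := abs_tsum_branching_le_s3 hm0 hν_nonneg hsum hmean hψ hφ
  simp only [mul_comm (ψ _ : ℝ) (φ _ : ℝ)] at hψφ
  set B := ∑ j ∈ Icc 2 m, (m.choose j : ℝ) * ∑' k : ℕ, ν k * |(k : ℝ) - 1| ^ j
  calc _ ≤ |κ * _| + |κ * _| + |γ * _| + |γ * _| := norm_add₄_le (E := ℝ) ..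
    _ ≤ κ * (5 * (2 ^ m - 1) * absPowSum m φ) + κ * (5 * (2 ^ m - 1) * absPowSum m ψ)
        + γ * (B * (absPowSum m φ + absPowSum m ψ))
        + γ * (B * (absPowSum m ψ + absPowSum m φ)) := by
        simp only [abs_mul, abs_of_pos hκ, abs_of_pos hγ]
        gcongr
        exacts [abs_tsum_migration_le hm0 hp_nonneg hp_symm hp_sum hφ,
          abs_tsum_migration_le hm0 hp_nonneg hp_symm hp_sum hψ]
    -- the branching terms use only two of the three copies of `γ * B`
    _ ≤ _ := by linarith [mul_nonneg hγ.le ((abs_nonneg _).trans hφψ)]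

theorem generator_bound_hm {S : Type*} [Countable S]
    (κ γ : ℝ) (hκ : 0 < κ) (hγ : 0 < γ)
    (p : S → S → ℝ)
    (hp_nonneg : ∀ x y, 0 ≤ p x y)
    (hp_symm : ∀ x y, p x y = p y x)
    (hp_sum : ∀ x, ∑' y, p x y = 1)
    (ν : ℕ → ℝ) (hν_nonneg : ∀ k, 0 ≤ ν k) (hν_sum : ∑' k, ν k = 1)
    (m : ℕ) (hm1 : 1 ≤ m)
    (hν_critical : Summable (fun k : ℕ => (k : ℝ) * ν k) ∧ ∑' k : ℕ, (k : ℝ) * ν k = 1)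
    (hν_moment : Summable fun k : ℕ => (k : ℝ) ^ m * ν k)
    (hm : (S →₀ ℤ) → (S →₀ ℤ) → ℝ)
    (hhm : ∀ φ ψ : S →₀ ℤ,
      hm φ ψ = ∑' x : S, (((|φ x| : ℤ) : ℝ) ^ m + ((|ψ x| : ℤ) : ℝ) ^ m))
    (φ ψ : S →₀ ℤ) (hφ : ∀ x, 0 ≤ φ x) (hψ : ∀ x, 0 ≤ ψ x) :
    |κ * (∑' q : S × S, (φ q.1 : ℝ) * p q.1 q.2 *
          (hm (φ + Finsupp.single q.2 1 - Finsupp.single q.1 1) ψ - hm φ ψ))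
      + κ * (∑' q : S × S, (ψ q.1 : ℝ) * p q.1 q.2 *
          (hm φ (ψ + Finsupp.single q.2 1 - Finsupp.single q.1 1) - hm φ ψ))
      + γ * (∑' x : S, (φ x : ℝ) * (ψ x : ℝ) *
          ∑' k : ℕ, ν k * (hm (φ + Finsupp.single x ((k : ℤ) - 1)) ψ - hm φ ψ))
      + γ * (∑' x : S, (φ x : ℝ) * (ψ x : ℝ) *
          ∑' k : ℕ, ν k * (hm φ (ψ + Finsupp.single x ((k : ℤ) - 1)) - hm φ ψ))|
      ≤ (5 * κ * ((2 : ℝ) ^ m - 1)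
          + 3 * γ * ∑ j ∈ Finset.Icc 2 m,
              (m.choose j : ℝ) * ∑' k : ℕ, ν k * |(k : ℝ) - 1| ^ j)
        * hm φ ψ :=
  generator_bound_hm_general κ γ hκ hγ p hp_nonneg hp_symm hp_sum ν hν_nonneg hν_sum m hm1
    hν_critical hν_moment hm hhm φ ψ hφ hψ
end

section
/- Let (ν_k)_{k≥0} be a probability distribution on the nonnegative integers with Σ_k k ν_k = 1, put σ² = Σ_k ν_k (k−1)² and m₃ = Σ_k ν_k |k−1|³, and assume m₃ < ∞. Then there exists a universal constant C > 0 such that for all reals a, b ≥ 0, setting w = (a+b) + i(a−b): | Σ_{k≥0} ν_k ( e^{−(k−1)w} − 1 ) − (1/2) σ² w² | ≤ C · m₃ · e^{a+b} · (a³ + b³). -/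
/-!
Put `z_k = -(k - 1) w`. As `k ≥ 0` and `Re w = a + b`, every `z_k` has real part at most
`a + b`, so the second-order Taylor remainder of `exp` at `z_k` is at most `|z_k|³ e^{a+b}`;
a bound by `e^{Re z}` rather than `e^{|z|}` is essential, since `|z_k|` is unbounded in `k`.
Summing against `ν`, the linear terms cancel by criticality, the quadratic terms give
`σ² w² / 2`, and `|w| ≤ 2 (a + b)` gives `|w|³ ≤ 32 (a³ + b³)`.
-/

open Finset Nat

theorem hasDerivAt_sum_range_succ_pow_div_factorial {𝕜 : Type*} [NontriviallyNormedField 𝕜]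
    [CharZero 𝕜] (n : ℕ) (u : 𝕜) :
    HasDerivAt (fun u => ∑ i ∈ range (n + 1), u ^ i / (i ! : 𝕜))
      (∑ i ∈ range n, u ^ i / (i ! : 𝕜)) u := by
  induction n with
  | zero => simpa using hasDerivAt_const u (1 : 𝕜)
  | succ n ih =>
    have hsplit : (fun u => ∑ i ∈ range (n + 1 + 1), u ^ i / (i ! : 𝕜)) =
        fun u => ∑ i ∈ range (n + 1), u ^ i / (i ! : 𝕜) + u ^ (n + 1) / ((n + 1)! : 𝕜) :=
      funext fun u => sum_range_succ _ _
    rw [hsplit, sum_range_succ]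
    refine (ih.add ((hasDerivAt_pow (n + 1) u).div_const _)).congr_deriv ?_
    rw [factorial_succ, cast_mul, add_tsub_cancel_right]
    field_simp

theorem Complex.norm_exp_sub_sum_range_le_of_re_le {z : ℂ} {M : ℝ} (hM : 0 ≤ M)
    (hz : z.re ≤ M) (n : ℕ) :
    ‖exp z - ∑ i ∈ range n, z ^ i / (i ! : ℂ)‖ ≤ ‖z‖ ^ n * Real.exp M := by
  suffices ∀ t ∈ Set.Icc (0 : ℝ) 1,
      ‖exp (t * z) - ∑ i ∈ range n, (t * z) ^ i / (i ! : ℂ)‖ ≤ ‖z‖ ^ n * Real.exp M by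
    simpa using this 1 (by simp)
  induction n with
  | zero =>
    intro t ⟨ht0, ht1⟩
    simp only [sum_range_zero, sub_zero, pow_zero, one_mul, norm_exp, Real.exp_le_exp]
    simp only [mul_re, ofReal_re, ofReal_im, zero_mul, sub_zero]
    nlinarith
  | succ n ih =>
    have hderiv (t : ℝ) : HasDerivAt
        (fun t : ℝ => exp (t * z) - ∑ i ∈ range (n + 1), (t * z) ^ i / (i ! : ℂ))
        (z * (exp (t * z) - ∑ i ∈ range n, (t * z) ^ i / (i ! : ℂ))) t := by
      have hlin : HasDerivAt (fun t : ℝ => (t : ℂ) * z) z t := by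
        simpa using (hasDerivAt_id (t : ℂ)).comp_ofReal.mul_const z
      exact (((hasDerivAt_exp _).sub (hasDerivAt_sum_range_succ_pow_div_factorial n _)).comp t
        hlin).congr_deriv (mul_comm _ _)
    intro t ht
    have hstart : exp ((0 : ℝ) * z) - ∑ i ∈ range (n + 1), ((0 : ℝ) * z) ^ i / (i ! : ℂ) = 0 := by
      simp [sum_range_succ']
    have hmvt := norm_image_sub_le_of_norm_deriv_le_segment'
      (fun t _ => (hderiv t).hasDerivWithinAt) (C := ‖z‖ ^ (n + 1) * Real.exp M) ?_ t ht
    · beta_reduce at hmvt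
      rw [hstart, sub_zero, sub_zero] at hmvt
      exact hmvt.trans (mul_le_of_le_one_right (by positivity) ht.2)
    · intro s hs
      rw [norm_mul, pow_succ, mul_comm (‖z‖ ^ n), mul_assoc]
      exact mul_le_mul_of_nonneg_left (ih s (Set.Ico_subset_Icc_self hs)) (norm_nonneg z)

theorem summable_mul_sq_of_summable_mul_abs_pow_three {ι : Type*} {ν f : ι → ℝ}
    (hν : ∀ i, 0 ≤ ν i) (hν_summable : Summable ν)
    (h3 : Summable fun i => ν i * |f i| ^ 3) : Summable fun i => ν i * f i ^ 2 := by
  refine (hν_summable.add h3).of_nonneg_of_le (fun i => mul_nonneg (hν i) (sq_nonneg _))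
    fun i => ?_
  have hsq : f i ^ 2 ≤ 1 + |f i| ^ 3 := by
    rw [← sq_abs]
    nlinarith [abs_nonneg (f i), mul_nonneg (abs_nonneg (f i)) (sq_nonneg (|f i| - 1))]
  nlinarith [hν i]

open Complex in
theorem norm_tsum_mul_cexp_neg_sub_quadratic_le {ι : Type*} {ν X : ι → ℝ} {w : ℂ} {M : ℝ}
    (hν : ∀ i, 0 ≤ ν i) (hM : 0 ≤ M) (hre : ∀ i, -X i * w.re ≤ M)
    (hmean : HasSum (fun i => ν i * X i) 0) (hvar : Summable fun i => ν i * X i ^ 2)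
    (h3 : Summable fun i => ν i * |X i| ^ 3) :
    ‖∑' i, (ν i : ℂ) * (exp (-(X i : ℂ) * w) - 1)
        - (1 / 2) * ((∑' i, ν i * X i ^ 2 : ℝ) : ℂ) * w ^ 2‖
      ≤ (∑' i, ν i * |X i| ^ 3) * ‖w‖ ^ 3 * Real.exp M := by
  set R : ι → ℂ := fun i => (ν i : ℂ) *
    (exp (-(X i : ℂ) * w) - 1 - (-(X i : ℂ) * w) - (-(X i : ℂ) * w) ^ 2 / 2) with hR_def
  have hR_le (i : ι) : ‖R i‖ ≤ ν i * |X i| ^ 3 * (‖w‖ ^ 3 * Real.exp M) := by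
    have htaylor := norm_exp_sub_sum_range_le_of_re_le hM (z := -(X i : ℂ) * w)
      (by simpa using hre i) 3
    have hsum : ∑ k ∈ range 3, (-(X i : ℂ) * w) ^ k / (k ! : ℂ)
        = 1 + (-(X i : ℂ) * w) + (-(X i : ℂ) * w) ^ 2 / 2 := by
      simp [sum_range_succ]
    have hnorm : ‖-(X i : ℂ) * w‖ = |X i| * ‖w‖ := by simp
    rw [hsum, hnorm, ← sub_sub, ← sub_sub] at htaylor
    rw [hR_def, norm_mul, norm_real, Real.norm_of_nonneg (hν i)]
    calc _ ≤ ν i * ((|X i| * ‖w‖) ^ 3 * Real.exp M) := mul_le_mul_of_nonneg_left htaylor (hν i)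
      _ = _ := by ring
  have hR_summable : Summable fun i => ‖R i‖ :=
    (h3.mul_right _).of_nonneg_of_le (fun i => norm_nonneg _) hR_le
  have hsplit : HasSum (fun i => (ν i : ℂ) * (exp (-(X i : ℂ) * w) - 1))
      (∑' i, R i + 0 * -w + ((∑' i, ν i * X i ^ 2 : ℝ) : ℂ) * (w ^ 2 / 2)) := by
    refine ((hR_summable.of_norm.hasSum.add ((hasSum_ofReal.2 hmean).mul_right (-w))).add
      ((hasSum_ofReal.2 hvar.hasSum).mul_right (w ^ 2 / 2))).congr_fun fun i => ?_
    simp only [hR_def]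
    push_cast
    ring
  have hremainder : ∑' i, (ν i : ℂ) * (exp (-(X i : ℂ) * w) - 1)
      - (1 / 2) * ((∑' i, ν i * X i ^ 2 : ℝ) : ℂ) * w ^ 2 = ∑' i, R i := by
    rw [hsplit.tsum_eq]; ring
  rw [hremainder]
  calc ‖∑' i, R i‖ ≤ ∑' i, ‖R i‖ := norm_tsum_le_tsum_norm hR_summable
    _ ≤ ∑' i, ν i * |X i| ^ 3 * (‖w‖ ^ 3 * Real.exp M) :=
      hR_summable.tsum_le_tsum hR_le (h3.mul_right _)
    _ = _ := by rw [tsum_mul_right, mul_assoc]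

theorem norm_add_I_mul_sub_pow_three_le {a b : ℝ} (ha : 0 ≤ a) (hb : 0 ≤ b) :
    ‖((a + b : ℝ) : ℂ) + Complex.I * ((a - b : ℝ) : ℂ)‖ ^ 3 ≤ 32 * (a ^ 3 + b ^ 3) := by
  have hnorm : ‖((a + b : ℝ) : ℂ) + Complex.I * ((a - b : ℝ) : ℂ)‖ ≤ 2 * (a + b) := by
    have hdiff : |a - b| ≤ a + b := abs_le.2 ⟨by linarith, by linarith⟩
    refine (norm_add_le _ _).trans ?_
    simp only [norm_mul, Complex.norm_I, one_mul, Complex.norm_real, Real.norm_eq_abs]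
    rw [abs_of_nonneg (by linarith)]
    linarith
  calc _ ≤ (2 * (a + b)) ^ 3 := by gcongr
    _ ≤ 32 * (a ^ 3 + b ^ 3) := by nlinarith [mul_nonneg (sq_nonneg (a - b)) (add_nonneg ha hb)]

theorem br_taylor_remainder_bound (ν : ℕ → ℝ)
    (hν_nonneg : ∀ k, 0 ≤ ν k) (hν_sum : ∑' k, ν k = 1)
    (hν_mean_summable : Summable fun k : ℕ => (k : ℝ) * ν k)
    (hν_mean : ∑' k : ℕ, (k : ℝ) * ν k = 1)
    (hν_m3 : Summable fun k : ℕ => ν k * |(k : ℝ) - 1| ^ 3) :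
    ∃ C : ℝ, 0 < C ∧
      ∀ a b : ℝ, 0 ≤ a → 0 ≤ b →
        ∀ w : ℂ, w = ((a + b : ℝ) : ℂ) + Complex.I * ((a - b : ℝ) : ℂ) →
          norm
              ((∑' k : ℕ, (ν k : ℂ) * (Complex.exp (-((k : ℂ) - 1) * w) - 1))
                - (1 / 2) * ((∑' k : ℕ, ν k * ((k : ℝ) - 1) ^ 2 : ℝ) : ℂ) * w ^ 2)
            ≤ C * (∑' k : ℕ, ν k * |(k : ℝ) - 1| ^ 3) * Real.exp (a + b)
                * (a ^ 3 + b ^ 3) := by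
  have hν_summable : Summable ν := by
    by_contra h
    simp [tsum_eq_zero_of_not_summable h] at hν_sum
  have hcentered : HasSum (fun k : ℕ => ν k * ((k : ℝ) - 1)) 0 := by
    have := hν_mean_summable.hasSum.sub hν_summable.hasSum
    rw [hν_mean, hν_sum, sub_self] at this
    exact this.congr_fun fun k => by ring
  refine ⟨32, by norm_num, fun a b ha hb w hw => ?_⟩
  have hre (k : ℕ) : -((k : ℝ) - 1) * w.re ≤ a + b := by
    rw [hw]
    simp only [Complex.add_re, Complex.ofReal_re, Complex.mul_re, Complex.I_re, Complex.ofReal_im,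
      Complex.I_im]
    nlinarith [(Nat.cast_nonneg k : (0 : ℝ) ≤ k)]
  have hbound := norm_tsum_mul_cexp_neg_sub_quadratic_le hν_nonneg (by linarith) hre hcentered
    (summable_mul_sq_of_summable_mul_abs_pow_three hν_nonneg hν_summable hν_m3) hν_m3
  simp only [Complex.ofReal_sub, Complex.ofReal_natCast, Complex.ofReal_one] at hbound
  have hm3 : 0 ≤ ∑' k : ℕ, ν k * |(k : ℝ) - 1| ^ 3 :=
    tsum_nonneg fun k => mul_nonneg (hν_nonneg k) (by positivity)
  calc _ ≤ _ := hbound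
    _ ≤ (∑' k : ℕ, ν k * |(k : ℝ) - 1| ^ 3) * (32 * (a ^ 3 + b ^ 3)) * Real.exp (a + b) := by
      gcongr
      exact hw ▸ norm_add_I_mul_sub_pow_three_le ha hb
    _ = _ := by ring
end

section
/- Let μ and μ' be Borel probability measures on [0,∞)² such that for all a, b ≥ 0: ∫ e^{−(x+y)(a+b) − i(x−y)(a−b)} dμ(x,y) = ∫ e^{−(x+y)(a+b) − i(x−y)(a−b)} dμ'(x,y). Then μ = μ'. (Equivalently, the mixed Laplace–Fourier transform (a,b) ↦ E[e^{−(X+Y)(a+b) − i(X−Y)(a−b)}], a, b ≥ 0, determines the joint distribution of a pair (X,Y) of nonnegative random variables.) -/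
/-!
In the coordinate `z = (x + y) + i (x - y)` the integrand becomes `exp (-(a z + b z̄))`, and both
laws are pushed to the closed right half-plane, where these kernels (`a, b ≥ 0`) are bounded by
one, form a multiplicative monoid closed under conjugation, and separate points: if `z ≠ w`, then
`exp (-t z) ≠ exp (-t w)` for `t = π / ‖z - w‖`, since `t (z - w)` has modulus `π` and so is not in
`2πiℤ`. By Stone–Weierstrass their span is dense enough to determine a finite measure on a Polish
space.
-/

open MeasureTheory BoundedContinuousFunction

theorem MeasureTheory.ext_of_forall_mem_submonoid_integral_eq_of_polish
    {𝕜 E : Type*} [RCLike 𝕜] [TopologicalSpace E] [PolishSpace E]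
    [MeasurableSpace E] [BorelSpace E] {P P' : Measure E} [IsFiniteMeasure P]
    [IsFiniteMeasure P'] {M : Submonoid (E →ᵇ 𝕜)} (hstar : ∀ g ∈ M, star g ∈ M)
    (hsep : ∀ x y : E, x ≠ y → ∃ g ∈ M, g x ≠ g y)
    (heq : ∀ g ∈ M, ∫ x, g x ∂P = ∫ x, g x ∂P') : P = P' := by
  refine ext_of_forall_mem_subalgebra_integral_eq_of_polish
    (A := StarAlgebra.adjoin 𝕜 (M : Set (E →ᵇ 𝕜))) ?_ fun g hg => ?_
  · intro x y hxy
    obtain ⟨g, hgM, hg⟩ := hsep x y hxy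
    exact ⟨_, ⟨_, ⟨g, StarAlgebra.subset_adjoin 𝕜 _ hgM, rfl⟩, rfl⟩, hg⟩
  · have hclosure : Submonoid.closure ((M : Set (E →ᵇ 𝕜)) ∪ star (M : Set (E →ᵇ 𝕜))) = M :=
      le_antisymm (Submonoid.closure_le.mpr (Set.union_subset le_rfl
        fun g hg => star_star g ▸ hstar _ hg))
        (Submonoid.subset_closure.trans' Set.subset_union_left)
    have hspan : g ∈ Submodule.span 𝕜 (M : Set (E →ᵇ 𝕜)) := by
      rw [← hclosure, ← StarAlgebra.adjoin_eq_span]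
      exact hg
    clear hg
    induction hspan using Submodule.span_induction with
    | mem g hgM => exact heq g hgM
    | zero => simp
    | add g h _ _ hg hh =>
      simp only [coe_add, Pi.add_apply]
      rw [integral_add (g.integrable P) (h.integrable P),
        integral_add (g.integrable P') (h.integrable P'), hg, hh]
    | smul c g _ hg =>
      simp only [coe_smul, smul_eq_mul]
      rw [integral_const_mul, integral_const_mul, hg]

open Complex ComplexConjugate

lemma Complex.exp_ne_one_of_norm_eq_pi {z : ℂ} (hz : ‖z‖ = Real.pi) : exp z ≠ 1 := by
  rw [Ne, exp_eq_one_iff]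
  rintro ⟨n, rfl⟩
  have hn : |(n : ℝ)| * 2 = 1 := by
    have := Real.pi_pos
    rw [norm_mul, norm_mul, norm_mul, Complex.norm_intCast, Complex.norm_ofNat, Complex.norm_real,
      Real.norm_of_nonneg this.le, Complex.norm_I] at hz
    nlinarith
  have : |n| * 2 = 1 := by exact_mod_cast hn
  omega

lemma Complex.exists_exp_neg_mul_ne {z w : ℂ} (hzw : z ≠ w) :
    ∃ t : ℝ, 0 ≤ t ∧ exp (-(t * z)) ≠ exp (-(t * w)) := by
  set t := Real.pi / ‖w - z‖
  have hpos : 0 < ‖w - z‖ := norm_pos_iff.mpr (sub_ne_zero.mpr hzw.symm)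
  have hnorm : ‖(t : ℂ) * (w - z)‖ = Real.pi := by
    rw [norm_mul, norm_real, Real.norm_of_nonneg (by positivity), div_mul_cancel₀ _ hpos.ne']
  refine ⟨t, by positivity, fun h => exp_ne_one_of_norm_eq_pi hnorm ?_⟩
  rw [mul_sub, sub_eq_add_neg, exp_add, h, ← exp_add, add_neg_cancel, exp_zero]

noncomputable section

namespace Complex

def rightHalfPlane : Set ℂ := {z | 0 ≤ z.re}

lemma isClosed_rightHalfPlane : IsClosed rightHalfPlane :=
  isClosed_le continuous_const continuous_re

instance : PolishSpace rightHalfPlane := isClosed_rightHalfPlane.polishSpace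

def laplaceKernel (a b : ℝ) (z : ℂ) : ℂ := exp (-(a * z + b * conj z))

lemma laplaceKernel_mul (a b a' b' : ℝ) (z : ℂ) :
    laplaceKernel a b z * laplaceKernel a' b' z = laplaceKernel (a + a') (b + b') z := by
  simp only [laplaceKernel, ← exp_add]
  congr 1
  push_cast
  ring

lemma conj_laplaceKernel (a b : ℝ) (z : ℂ) :
    conj (laplaceKernel a b z) = laplaceKernel b a z := by
  simp only [laplaceKernel, ← exp_conj, map_neg, map_add, map_mul, conj_ofReal, conj_conj,
    add_comm]

lemma laplaceKernel_zero_zero (z : ℂ) : laplaceKernel 0 0 z = 1 := by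
  simp [laplaceKernel]

lemma norm_laplaceKernel (a b : ℝ) (z : ℂ) :
    ‖laplaceKernel a b z‖ = Real.exp (-((a + b) * z.re)) := by
  rw [laplaceKernel, norm_exp]
  simp only [neg_re, add_re, re_ofReal_mul, conj_re]
  congr 1
  ring

lemma norm_laplaceKernel_le_one {a b : ℝ} (ha : 0 ≤ a) (hb : 0 ≤ b) {z : ℂ} (hz : 0 ≤ z.re) :
    ‖laplaceKernel a b z‖ ≤ 1 := by
  rw [norm_laplaceKernel, Real.exp_le_one_iff, neg_nonpos]
  positivity

lemma continuous_laplaceKernel (a b : ℝ) : Continuous (laplaceKernel a b) := by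
  unfold laplaceKernel
  fun_prop

def boundedLaplaceKernel (a b : ℝ) (ha : 0 ≤ a) (hb : 0 ≤ b) : rightHalfPlane →ᵇ ℂ :=
  .ofNormedAddCommGroup (fun z => laplaceKernel a b z)
    ((continuous_laplaceKernel a b).comp continuous_subtype_val) 1
    fun z => norm_laplaceKernel_le_one ha hb z.2

def laplaceKernelSubmonoid : Submonoid (rightHalfPlane →ᵇ ℂ) where
  carrier := {g | ∃ a b : ℝ, 0 ≤ a ∧ 0 ≤ b ∧ ∀ z, g z = laplaceKernel a b z}
  mul_mem' := by
    rintro f g ⟨a, b, ha, hb, hf⟩ ⟨a', b', ha', hb', hg⟩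
    exact ⟨a + a', b + b', add_nonneg ha ha', add_nonneg hb hb', fun z => by
      rw [BoundedContinuousFunction.coe_mul, Pi.mul_apply, hf, hg, laplaceKernel_mul]⟩
  one_mem' := ⟨0, 0, le_rfl, le_rfl, fun z => (laplaceKernel_zero_zero z).symm⟩

lemma star_mem_laplaceKernelSubmonoid {g : rightHalfPlane →ᵇ ℂ}
    (hg : g ∈ laplaceKernelSubmonoid) : star g ∈ laplaceKernelSubmonoid := by
  obtain ⟨a, b, ha, hb, hg⟩ := hg
  exact ⟨b, a, hb, ha, fun z => by
    rw [BoundedContinuousFunction.star_apply, hg, RCLike.star_def, conj_laplaceKernel]⟩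

lemma laplaceKernelSubmonoid_separatesPoints {z w : rightHalfPlane} (hzw : z ≠ w) :
    ∃ g ∈ laplaceKernelSubmonoid, g z ≠ g w := by
  obtain ⟨t, ht, hne⟩ := exists_exp_neg_mul_ne (Subtype.coe_ne_coe.mpr hzw)
  refine ⟨boundedLaplaceKernel t 0 ht le_rfl, ⟨t, 0, ht, le_rfl, fun _ => rfl⟩, ?_⟩
  simpa [boundedLaplaceKernel, laplaceKernel] using hne

theorem measure_eq_of_integral_laplaceKernel_eq {ν ν' : Measure ℂ}
    [IsFiniteMeasure ν] [IsFiniteMeasure ν'] (hν : ∀ᵐ z ∂ν, 0 ≤ z.re)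
    (hν' : ∀ᵐ z ∂ν', 0 ≤ z.re)
    (h : ∀ a b : ℝ, 0 ≤ a → 0 ≤ b → ∫ z, laplaceKernel a b z ∂ν = ∫ z, laplaceKernel a b z ∂ν') :
    ν = ν' := by
  have hmeas : MeasurableSet rightHalfPlane := isClosed_rightHalfPlane.measurableSet
  have hrestrict : ∀ ρ : Measure ℂ, (∀ᵐ z ∂ρ, 0 ≤ z.re) → ρ.restrict rightHalfPlane = ρ :=
    fun ρ hρ => Measure.restrict_eq_self_of_ae_mem hρ
  have hcomap : ν.comap Subtype.val = ν'.comap (Subtype.val : rightHalfPlane → ℂ) := by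
    refine ext_of_forall_mem_submonoid_integral_eq_of_polish
      (fun g => star_mem_laplaceKernelSubmonoid)
      (fun z w => laplaceKernelSubmonoid_separatesPoints) ?_
    rintro g ⟨a, b, ha, hb, hg⟩
    simp only [hg]
    rw [integral_subtype_comap hmeas, integral_subtype_comap hmeas, hrestrict ν hν,
      hrestrict ν' hν', h a b ha hb]
  rw [← hrestrict ν hν, ← hrestrict ν' hν', ← map_comap_subtype_coe hmeas,
    ← map_comap_subtype_coe hmeas, hcomap]

end Complex

def sumDiff (q : ℝ × ℝ) : ℂ := ⟨q.1 + q.2, q.1 - q.2⟩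

lemma sumDiff_injective : Function.Injective sumDiff := by
  intro p q hpq
  have h1 : p.1 + p.2 = q.1 + q.2 := congrArg re hpq
  have h2 : p.1 - p.2 = q.1 - q.2 := congrArg im hpq
  exact Prod.ext (by linarith) (by linarith)

lemma continuous_sumDiff : Continuous sumDiff :=
  equivRealProdCLM.symm.continuous.comp <|
    (continuous_fst.add continuous_snd).prodMk (continuous_fst.sub continuous_snd)

lemma laplaceKernel_sumDiff (a b : ℝ) (q : ℝ × ℝ) :
    laplaceKernel a b (sumDiff q) = exp (-(((q.1 + q.2) * (a + b) : ℝ) : ℂ)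
      - I * (((q.1 - q.2) * (a - b) : ℝ) : ℂ)) := by
  rw [laplaceKernel, sumDiff, mk_eq_add_mul_I, map_add, map_mul, conj_ofReal, conj_ofReal, conj_I]
  congr 1
  push_cast
  ring

lemma ae_re_nonneg_map_sumDiff {ν : Measure (ℝ × ℝ)} [IsProbabilityMeasure ν]
    (hν : ν {q : ℝ × ℝ | 0 ≤ q.1 ∧ 0 ≤ q.2} = 1) : ∀ᵐ z ∂ν.map sumDiff, 0 ≤ z.re := by
  have hquadrant : ∀ᵐ q ∂ν, 0 ≤ q.1 ∧ 0 ≤ q.2 :=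
    (mem_ae_iff_prob_eq_one ((measurableSet_le measurable_const measurable_fst).inter
      (measurableSet_le measurable_const measurable_snd))).mpr hν
  rw [ae_map_iff continuous_sumDiff.aemeasurable (measurableSet_le measurable_const measurable_re)]
  filter_upwards [hquadrant] with q hq
  exact add_nonneg hq.1 hq.2

end

theorem laplace_fourier_determines (μ μ' : Measure (ℝ × ℝ))
    [IsProbabilityMeasure μ] [IsProbabilityMeasure μ']
    (hμ : μ {q : ℝ × ℝ | 0 ≤ q.1 ∧ 0 ≤ q.2} = 1)
    (hμ' : μ' {q : ℝ × ℝ | 0 ≤ q.1 ∧ 0 ≤ q.2} = 1)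
    (h : ∀ a b : ℝ, 0 ≤ a → 0 ≤ b →
      (∫ q : ℝ × ℝ,
          Complex.exp (-(((q.1 + q.2) * (a + b) : ℝ) : ℂ)
            - Complex.I * (((q.1 - q.2) * (a - b) : ℝ) : ℂ)) ∂μ)
        = ∫ q : ℝ × ℝ,
            Complex.exp (-(((q.1 + q.2) * (a + b) : ℝ) : ℂ)
              - Complex.I * (((q.1 - q.2) * (a - b) : ℝ) : ℂ)) ∂μ') :
    μ = μ' := by
  have hsumDiff : MeasurableEmbedding sumDiff :=
    continuous_sumDiff.measurableEmbedding sumDiff_injective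
  apply hsumDiff.map_injective
  refine measure_eq_of_integral_laplaceKernel_eq (ae_re_nonneg_map_sumDiff hμ)
    (ae_re_nonneg_map_sumDiff hμ') fun a b ha hb => ?_
  simpa only [hsumDiff.integral_map, laplaceKernel_sumDiff] using h a b ha hb
end
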